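/- Proposition (exact local invariance of the expected entry-game score, discrete covariates). Let 𝒳 be a finite set and suppose for all x ∈ 𝒳: η_j(θ;x) ≥ c and η₁(θ;x) − η_j(θ;x) ≥ c for j = 2,3, η_j(θ;x) ≤ 1, and ∇_θη_j(θ;x) exists. Then there exists δ > 0 such that for every conditional pmf p with sup_{y,x} |p(y|x) − p₀(y|x)| ≤ δ and every x ∈ 𝒳, Δ(x; p, p₀) = 0; in particular E[m_θ(X; p)] = E[m_θ(X; p₀)], so the pathwise derivative of p ↦ E[m_θ(X; p)] at p₀ is zero in every direction. -/

import Mathlib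

open scoped BigOperators
open Classical

noncomputable section

/-- Outcomes of the two-player entry game. -/
inductive EntryOutcome : Type
  | y00 | y01 | y10 | y11
deriving DecidableEq

instance : Fintype EntryOutcome :=
  ⟨{.y00, .y01, .y10, .y11}, by intro x; cases x <;> simp⟩

namespace EntryGame

variable {𝒳 : Type*} {d : ℕ}

/-- `Z₁(x;p) = p((1,0)|x) η₁(x) − (p((1,0)|x)+p((0,1)|x)) η₂(x)`. -/
def Z1 (η₁ η₂ : 𝒳 → ℝ) (p : 𝒳 → EntryOutcome → ℝ) (x : 𝒳) : ℝ :=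
  p x .y10 * η₁ x - (p x .y10 + p x .y01) * η₂ x

/-- `Z₂(x;p) = p((1,0)|x) η₁(x) − (p((1,0)|x)+p((0,1)|x)) η₃(x)`. -/
def Z2 (η₁ η₃ : 𝒳 → ℝ) (p : 𝒳 → EntryOutcome → ℝ) (x : 𝒳) : ℝ :=
  p x .y10 * η₁ x - (p x .y10 + p x .y01) * η₃ x

/-- Regime indicator `I₁ = 1{Z₁ ≤ 0}·1{Z₂ ≥ 0}`. -/
def I1 (η₁ η₂ η₃ : 𝒳 → ℝ) (p : 𝒳 → EntryOutcome → ℝ) (x : 𝒳) : ℝ :=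
  if Z1 η₁ η₂ p x ≤ 0 ∧ 0 ≤ Z2 η₁ η₃ p x then 1 else 0

/-- Regime indicator `I₂ = 1{Z₁ > 0}`. -/
def I2 (η₁ η₂ : 𝒳 → ℝ) (p : 𝒳 → EntryOutcome → ℝ) (x : 𝒳) : ℝ :=
  if 0 < Z1 η₁ η₂ p x then 1 else 0

/-- Regime indicator `I₃ = 1{Z₂ < 0}`. -/
def I3 (η₁ η₃ : 𝒳 → ℝ) (p : 𝒳 → EntryOutcome → ℝ) (x : 𝒳) : ℝ :=
  if Z2 η₁ η₃ p x < 0 then 1 else 0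

/-- The entry-game score `s_θ(y|x;p)`; `g j = ∇_θ η_j`, and the scores of the outcomes
`(0,0)` and `(1,1)` (which do not depend on `p`) are the given `s00`, `s11`. -/
def score (η₁ η₂ η₃ : 𝒳 → ℝ) (g₁ g₂ g₃ s00 s11 : 𝒳 → Fin d → ℝ)
    (p : 𝒳 → EntryOutcome → ℝ) (x : 𝒳) : EntryOutcome → Fin d → ℝ
  | .y00 => s00 x
  | .y11 => s11 x
  | .y10 =>
      (I1 η₁ η₂ η₃ p x / η₁ x) • g₁ x + (I2 η₁ η₂ p x / η₂ x) • g₂ x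
        + (I3 η₁ η₃ p x / η₃ x) • g₃ x
  | .y01 =>
      (I1 η₁ η₂ η₃ p x / η₁ x) • g₁ x
        + (I2 η₁ η₂ p x / (η₁ x - η₂ x)) • (g₁ x - g₂ x)
        + (I3 η₁ η₃ p x / (η₁ x - η₃ x)) • (g₁ x - g₃ x)

/-- The score discrepancy `Δ(x; p, p₀) = ‖Σ_y p₀(y|x)(s_θ(y|x;p) − s_θ(y|x;p₀))‖`. -/
def Δ (η₁ η₂ η₃ : 𝒳 → ℝ) (g₁ g₂ g₃ s00 s11 : 𝒳 → Fin d → ℝ)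
    (p p₀ : 𝒳 → EntryOutcome → ℝ) (x : 𝒳) : ℝ :=
  ‖∑ y : EntryOutcome, p₀ x y •
      (score η₁ η₂ η₃ g₁ g₂ g₃ s00 s11 p x y - score η₁ η₂ η₃ g₁ g₂ g₃ s00 s11 p₀ x y)‖

end EntryGame

open EntryGame Filter Topology
open scoped Topology

/-- Expected score `E[m_θ(X;p)] = Σ_x P(X = x) Σ_y p₀(y|x) s_θ(y|x;p)` for discrete covariates
with marginal pmf `px`. -/
noncomputable def expectedScore {𝒳 : Type*} [Fintype 𝒳] {d : ℕ}
    (η₁ η₂ η₃ : 𝒳 → ℝ) (g₁ g₂ g₃ s00 s11 : 𝒳 → Fin d → ℝ)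
    (px : 𝒳 → ℝ) (p₀ p : 𝒳 → EntryOutcome → ℝ) : Fin d → ℝ :=
  ∑ x : 𝒳, px x •
    ∑ y : EntryOutcome, p₀ x y • EntryGame.score η₁ η₂ η₃ g₁ g₂ g₃ s00 s11 p x y

/-!
The scores of the outcomes `(1,0)` and `(0,1)` depend on `p` only through the regime,
i.e. through the signs of `Z₁(x;p)` and `Z₂(x;p)`, which are continuous in `p`. A small
perturbation of `p₀` keeps every nonzero `Z_j(x;p₀)` away from zero, so it can only move `x`
out of a regime boundary `Z_j(x;p₀) = 0` (and `Z₁ ≤ Z₂` at `p₀`, as `p₀ ≥ 0` and `η₃ ≤ η₂`,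
so the only boundaries are those between regime 1 and regimes 2, 3). There the boundary gradient identity says that the
`p₀`-weighted score is `(p₁₀ + p₀₁)/η₁ · ∇η₁` in both adjacent regimes, so `m_θ(x;·)` does not
change. Since `𝒳` is finite, this holds on a whole neighbourhood of `p₀`, which gives both the
uniform `δ` and the vanishing of the pathwise derivative.
-/

open Filter Topology

def KeepsStrictSign (z w : ℝ) : Prop := (0 < w → 0 < z) ∧ (w < 0 → z < 0)

theorem eventually_keepsStrictSign_nhds (w : ℝ) : ∀ᶠ z in 𝓝 w, KeepsStrictSign z w := by
  rcases lt_trichotomy w 0 with hw | rfl | hw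
  · filter_upwards [eventually_lt_nhds hw] with z hz
    exact ⟨fun h => absurd h hw.not_gt, fun _ => hz⟩
  · exact Eventually.of_forall fun _ => ⟨fun h => h.false.elim, fun h => h.false.elim⟩
  · filter_upwards [eventually_gt_nhds hw] with z hz
    exact ⟨fun _ => hz, fun h => absurd h hw.not_gt⟩

section Regimes

variable {E : Type*} [AddCommGroup E] [Module ℝ E]

/-- `I₁ v₁ + I₂ v₂ + I₃ v₃` for the regime indicators `I_j` of `(Z₁, Z₂) = (z₁, z₂)`. -/
def regimeSelect (z₁ z₂ : ℝ) (v₁ v₂ v₃ : E) : E :=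
  (if z₁ ≤ 0 ∧ 0 ≤ z₂ then (1 : ℝ) else 0) • v₁ + (if 0 < z₁ then (1 : ℝ) else 0) • v₂
    + (if z₂ < 0 then (1 : ℝ) else 0) • v₃

theorem regimeSelect_eq_of_keepsStrictSign {z₁ z₂ w₁ w₂ : ℝ} {v₁ v₂ v₃ : E}
    (hw : w₁ ≤ w₂) (h₁ : KeepsStrictSign z₁ w₁) (h₂ : KeepsStrictSign z₂ w₂)
    (hv₂ : w₁ = 0 → v₂ = v₁) (hv₃ : w₂ = 0 → v₃ = v₁) (hz : w₁ = 0 → w₂ = 0 → z₁ = z₂) :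
    regimeSelect z₁ z₂ v₁ v₂ v₃ = regimeSelect w₁ w₂ v₁ v₂ v₃ := by
  obtain ⟨h₁p, h₁n⟩ := h₁
  obtain ⟨h₂p, h₂n⟩ := h₂
  rcases lt_trichotomy w₁ 0 with hw₁ | rfl | hw₁
  · have hz₁ := h₁n hw₁
    rcases lt_trichotomy w₂ 0 with hw₂ | rfl | hw₂
    · simp [regimeSelect, hw₁.not_gt, hw₂.not_ge, hw₂, hz₁.not_gt, (h₂n hw₂).not_ge, h₂n hw₂]
    · rcases lt_or_ge z₂ 0 with hz₂ | hz₂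
      · simp [regimeSelect, hw₁.le, hw₁.not_gt, hz₁.not_gt, hz₂.not_ge, hz₂, hv₃ rfl]
      · simp [regimeSelect, hw₁.le, hw₁.not_gt, hz₁.le, hz₁.not_gt, hz₂, hz₂.not_gt]
    · simp [regimeSelect, hw₁.le, hw₁.not_gt, hw₂.le, hw₂.not_gt, hz₁.le, hz₁.not_gt,
        (h₂p hw₂).le, (h₂p hw₂).not_gt]
  · rcases hw.eq_or_lt with rfl | hw₂
    · rw [hz rfl rfl, hv₂ rfl, hv₃ rfl]
      rcases lt_trichotomy z₂ 0 with hz₂ | rfl | hz₂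
      · simp [regimeSelect, hz₂, hz₂.le, hz₂.not_ge, hz₂.not_gt]
      · simp [regimeSelect]
      · simp [regimeSelect, hz₂, hz₂.not_ge, hz₂.not_gt]
    · have hz₂ := h₂p hw₂
      rw [hv₂ rfl]
      rcases le_or_gt z₁ 0 with hz₁ | hz₁
      · simp [regimeSelect, hz₁, hz₁.not_gt, hz₂.le, hz₂.not_gt, hw₂.le, hw₂.not_gt]
      · simp [regimeSelect, hz₁, hz₁.not_ge, hz₂.not_gt, hw₂.le, hw₂.not_gt]
  · have hw₂ := hw₁.trans_le hw
    simp [regimeSelect, hw₁, hw₁.not_ge, hw₂.not_gt, h₁p hw₁, (h₁p hw₁).not_ge,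
      (h₂p hw₂).not_gt]

theorem boundary_gradient_identity {η₁ η a b : ℝ} (g₁ g : E) (hη : η ≠ 0) (hη₁ : η₁ ≠ 0)
    (hη₁η : η₁ - η ≠ 0) (hZ : a * η₁ - (a + b) * η = 0) :
    (a / η) • g + (b / (η₁ - η)) • (g₁ - g) = ((a + b) / η₁) • g₁ := by
  have ha : a / η = (a + b) / η₁ := by
    rw [div_eq_div_iff hη hη₁]; linarith
  have hb : b / (η₁ - η) = (a + b) / η₁ := by
    rw [div_eq_div_iff hη₁η hη₁]; linarith
  rw [ha, hb, ← smul_add, add_sub_cancel]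

end Regimes

namespace EntryGame

variable {𝒳 : Type*} {d : ℕ} {η₁ η₂ η₃ : 𝒳 → ℝ} {g₁ g₂ g₃ s00 s11 : 𝒳 → Fin d → ℝ}

theorem sum_entryOutcome {M : Type*} [AddCommMonoid M] (f : EntryOutcome → M) :
    ∑ y, f y = f .y00 + f .y01 + f .y10 + f .y11 := by
  simp [Finset.univ, Fintype.elems, add_assoc]

theorem Z2_sub_Z1 (p : 𝒳 → EntryOutcome → ℝ) (x : 𝒳) :
    Z2 η₁ η₃ p x - Z1 η₁ η₂ p x = (p x .y10 + p x .y01) * (η₂ x - η₃ x) := by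
  simp only [Z1, Z2]; ring

/-- The paper's `m_θ(x;p)`. -/
def meanScore (η₁ η₂ η₃ : 𝒳 → ℝ) (g₁ g₂ g₃ s00 s11 : 𝒳 → Fin d → ℝ)
    (p₀ p : 𝒳 → EntryOutcome → ℝ) (x : 𝒳) : Fin d → ℝ :=
  ∑ y, p₀ x y • score η₁ η₂ η₃ g₁ g₂ g₃ s00 s11 p x y

theorem meanScore_eq_regimeSelect (p₀ p : 𝒳 → EntryOutcome → ℝ) (x : 𝒳) :
    meanScore η₁ η₂ η₃ g₁ g₂ g₃ s00 s11 p₀ p x =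
      p₀ x .y00 • s00 x + p₀ x .y11 • s11 x +
        regimeSelect (Z1 η₁ η₂ p x) (Z2 η₁ η₃ p x)
          (((p₀ x .y10 + p₀ x .y01) / η₁ x) • g₁ x)
          ((p₀ x .y10 / η₂ x) • g₂ x + (p₀ x .y01 / (η₁ x - η₂ x)) • (g₁ x - g₂ x))
          ((p₀ x .y10 / η₃ x) • g₃ x + (p₀ x .y01 / (η₁ x - η₃ x)) • (g₁ x - g₃ x)) := by
  simp only [meanScore, sum_entryOutcome, score, regimeSelect, I1, I2, I3]
  module

theorem Δ_eq_norm_sub (p p₀ : 𝒳 → EntryOutcome → ℝ) (x : 𝒳) :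
    Δ η₁ η₂ η₃ g₁ g₂ g₃ s00 s11 p p₀ x =
      ‖meanScore η₁ η₂ η₃ g₁ g₂ g₃ s00 s11 p₀ p x
        - meanScore η₁ η₂ η₃ g₁ g₂ g₃ s00 s11 p₀ p₀ x‖ := by
  simp only [Δ, meanScore, smul_sub, Finset.sum_sub_distrib]

theorem expectedScore_congr [Fintype 𝒳] {px : 𝒳 → ℝ} {p₀ p : 𝒳 → EntryOutcome → ℝ}
    (h : ∀ x, meanScore η₁ η₂ η₃ g₁ g₂ g₃ s00 s11 p₀ p x
      = meanScore η₁ η₂ η₃ g₁ g₂ g₃ s00 s11 p₀ p₀ x) :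
    expectedScore η₁ η₂ η₃ g₁ g₂ g₃ s00 s11 px p₀ p
      = expectedScore η₁ η₂ η₃ g₁ g₂ g₃ s00 s11 px p₀ p₀ :=
  Finset.sum_congr rfl fun x _ => congrArg (px x • ·) (h x)

theorem meanScore_eq_of_keepsStrictSign {p₀ p : 𝒳 → EntryOutcome → ℝ} {x : 𝒳}
    (hη₂ : 0 < η₂ x) (hη₃ : 0 < η₃ x) (hη₁₂ : η₂ x < η₁ x) (hη₃₂ : η₃ x ≤ η₂ x)
    (ha : 0 ≤ p₀ x .y10) (hb : 0 ≤ p₀ x .y01)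
    (h₁ : KeepsStrictSign (Z1 η₁ η₂ p x) (Z1 η₁ η₂ p₀ x))
    (h₂ : KeepsStrictSign (Z2 η₁ η₃ p x) (Z2 η₁ η₃ p₀ x)) :
    meanScore η₁ η₂ η₃ g₁ g₂ g₃ s00 s11 p₀ p x
      = meanScore η₁ η₂ η₃ g₁ g₂ g₃ s00 s11 p₀ p₀ x := by
  rw [meanScore_eq_regimeSelect, meanScore_eq_regimeSelect]
  congr 1
  rcases (add_nonneg ha hb).eq_or_lt with hab | hab
  · obtain ⟨ha0, hb0⟩ : p₀ x .y10 = 0 ∧ p₀ x .y01 = 0 := ⟨by linarith, by linarith⟩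
    simp [regimeSelect, ha0, hb0]
  have hZ : Z2 η₁ η₃ p₀ x - Z1 η₁ η₂ p₀ x = _ := Z2_sub_Z1 p₀ x
  refine regimeSelect_eq_of_keepsStrictSign ?_ h₁ h₂ (fun h => ?_) (fun h => ?_) fun h h' => ?_
  · nlinarith
  · exact boundary_gradient_identity _ _ hη₂.ne' (by linarith) (by linarith) h
  · exact boundary_gradient_identity _ _ hη₃.ne' (by linarith) (by linarith) h
  · -- both boundaries at once force `η₂ = η₃`, and then `Z₁ = Z₂` identically
    have h23 : η₂ x = η₃ x := by nlinarith
    simp only [Z1, Z2, h23]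

theorem eventually_meanScore_eq [Finite 𝒳] {p₀ : 𝒳 → EntryOutcome → ℝ}
    (hη₂ : ∀ x, 0 < η₂ x) (hη₃ : ∀ x, 0 < η₃ x) (hη₁₂ : ∀ x, η₂ x < η₁ x)
    (hη₃₂ : ∀ x, η₃ x ≤ η₂ x) (hp₀ : ∀ x y, 0 ≤ p₀ x y) :
    ∀ᶠ p in 𝓝 p₀, ∀ x,
      meanScore η₁ η₂ η₃ g₁ g₂ g₃ s00 s11 p₀ p x
        = meanScore η₁ η₂ η₃ g₁ g₂ g₃ s00 s11 p₀ p₀ x := by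
  refine eventually_all.mpr fun x => ?_
  have hZ₁ : Continuous fun p : 𝒳 → EntryOutcome → ℝ => Z1 η₁ η₂ p x := by unfold Z1; fun_prop
  have hZ₂ : Continuous fun p : 𝒳 → EntryOutcome → ℝ => Z2 η₁ η₃ p x := by unfold Z2; fun_prop
  filter_upwards [(hZ₁.tendsto p₀).eventually (eventually_keepsStrictSign_nhds _),
    (hZ₂.tendsto p₀).eventually (eventually_keepsStrictSign_nhds _)] with p h₁ h₂
  exact meanScore_eq_of_keepsStrictSign (hη₂ x) (hη₃ x) (hη₁₂ x) (hη₃₂ x)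
    (hp₀ x _) (hp₀ x _) h₁ h₂

end EntryGame

theorem entry_game_expected_score_local_invariance_general {𝒳 : Type*} [Fintype 𝒳] {d : ℕ}
    (η₁ η₂ η₃ : 𝒳 → ℝ) (g₁ g₂ g₃ s00 s11 : 𝒳 → Fin d → ℝ)
    (c : ℝ) (hc : 0 < c)
    (hη₂ : ∀ x, c ≤ η₂ x) (hη₃ : ∀ x, c ≤ η₃ x)
    (hη₁₂ : ∀ x, c ≤ η₁ x - η₂ x)
    (hη₃₂ : ∀ x, η₃ x ≤ η₂ x)
    (px : 𝒳 → ℝ)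
    (p₀ : 𝒳 → EntryOutcome → ℝ)
    (hp₀ : ∀ x, (∀ y, 0 ≤ p₀ x y) ∧ ∑ y, p₀ x y = 1) :
    (∃ δ : ℝ, 0 < δ ∧
      ∀ p : 𝒳 → EntryOutcome → ℝ,
        (∀ x, (∀ y, 0 ≤ p x y) ∧ ∑ y, p x y = 1) →
        (∀ x y, |p x y - p₀ x y| ≤ δ) →
        (∀ x, Δ η₁ η₂ η₃ g₁ g₂ g₃ s00 s11 p p₀ x = 0) ∧
        expectedScore η₁ η₂ η₃ g₁ g₂ g₃ s00 s11 px p₀ p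
          = expectedScore η₁ η₂ η₃ g₁ g₂ g₃ s00 s11 px p₀ p₀) ∧
    (∀ p : 𝒳 → EntryOutcome → ℝ,
      (∀ x, (∀ y, 0 ≤ p x y) ∧ ∑ y, p x y = 1) →
      Tendsto (fun τ : ℝ => τ⁻¹ •
          (expectedScore η₁ η₂ η₃ g₁ g₂ g₃ s00 s11 px p₀
              (fun x y => p₀ x y + τ * (p x y - p₀ x y))
            - expectedScore η₁ η₂ η₃ g₁ g₂ g₃ s00 s11 px p₀ p₀))
        (𝓝[≠] (0 : ℝ)) (𝓝 0)) := by
  have hη₁₂' : ∀ x, η₂ x < η₁ x := fun x => by linarith [hη₁₂ x]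
  have hlocal := eventually_meanScore_eq (g₁ := g₁) (g₂ := g₂) (g₃ := g₃) (s00 := s00)
    (s11 := s11) (fun x => hc.trans_le (hη₂ x)) (fun x => hc.trans_le (hη₃ x)) hη₁₂' hη₃₂
    fun x => (hp₀ x).1
  refine ⟨?_, fun p _ => ?_⟩
  · obtain ⟨ε, hε, hball⟩ := Metric.eventually_nhds_iff.mp hlocal
    refine ⟨ε / 2, half_pos hε, fun p _ hclose => ?_⟩
    have hdist : dist p p₀ < ε := by
      refine lt_of_le_of_lt ?_ (half_lt_self hε)
      refine (dist_pi_le_iff (half_pos hε).le).mpr fun x => ?_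
      exact (dist_pi_le_iff (half_pos hε).le).mpr fun y =>
        (Real.dist_eq _ _).trans_le (hclose x y)
    have hm := hball hdist
    exact ⟨fun x => by rw [Δ_eq_norm_sub, hm x, sub_self, norm_zero], expectedScore_congr hm⟩
  · have hcont : Continuous fun τ : ℝ => fun x y => p₀ x y + τ * (p x y - p₀ x y) := by
      fun_prop
    have hline : Tendsto (fun τ : ℝ => fun x y => p₀ x y + τ * (p x y - p₀ x y))
        (𝓝[≠] 0) (𝓝 p₀) := by
      simpa using (hcont.tendsto 0).mono_left nhdsWithin_le_nhds
    refine tendsto_const_nhds.congr' ?_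
    filter_upwards [hline.eventually hlocal] with τ hτ
    rw [expectedScore_congr hτ, sub_self, smul_zero]

/-- **Exact local invariance of the expected entry-game score (discrete covariates).**
With finitely many covariate values, there is a `δ > 0` such that every conditional pmf within
`δ` of `p₀` in the sup norm yields a zero score discrepancy at every `x`, hence the same
expected score; in particular the pathwise derivative of `p ↦ E[m_θ(X;p)]` at `p₀` is zero in
every direction. -/
theorem entry_game_expected_score_local_invariance {𝒳 : Type*} [Fintype 𝒳] {d : ℕ}
    (η₁ η₂ η₃ : 𝒳 → ℝ) (g₁ g₂ g₃ s00 s11 : 𝒳 → Fin d → ℝ)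
    (c : ℝ) (hc : 0 < c)
    (hη₂ : ∀ x, c ≤ η₂ x) (hη₃ : ∀ x, c ≤ η₃ x)
    (hη₁₂ : ∀ x, c ≤ η₁ x - η₂ x) (hη₁₃ : ∀ x, c ≤ η₁ x - η₃ x)
    (hη₃₂ : ∀ x, η₃ x ≤ η₂ x)
    (hηle : ∀ x, η₁ x ≤ 1 ∧ η₂ x ≤ 1 ∧ η₃ x ≤ 1)
    (px : 𝒳 → ℝ) (hpx : (∀ x, 0 ≤ px x) ∧ ∑ x, px x = 1)
    (p₀ : 𝒳 → EntryOutcome → ℝ)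
    (hp₀ : ∀ x, (∀ y, 0 ≤ p₀ x y) ∧ ∑ y, p₀ x y = 1) :
    (∃ δ : ℝ, 0 < δ ∧
      ∀ p : 𝒳 → EntryOutcome → ℝ,
        (∀ x, (∀ y, 0 ≤ p x y) ∧ ∑ y, p x y = 1) →
        (∀ x y, |p x y - p₀ x y| ≤ δ) →
        (∀ x, Δ η₁ η₂ η₃ g₁ g₂ g₃ s00 s11 p p₀ x = 0) ∧
        expectedScore η₁ η₂ η₃ g₁ g₂ g₃ s00 s11 px p₀ p
          = expectedScore η₁ η₂ η₃ g₁ g₂ g₃ s00 s11 px p₀ p₀) ∧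
    (∀ p : 𝒳 → EntryOutcome → ℝ,
      (∀ x, (∀ y, 0 ≤ p x y) ∧ ∑ y, p x y = 1) →
      Tendsto (fun τ : ℝ => τ⁻¹ •
          (expectedScore η₁ η₂ η₃ g₁ g₂ g₃ s00 s11 px p₀
              (fun x y => p₀ x y + τ * (p x y - p₀ x y))
            - expectedScore η₁ η₂ η₃ g₁ g₂ g₃ s00 s11 px p₀ p₀))
        (𝓝[≠] (0 : ℝ)) (𝓝 0)) :=
  entry_game_expected_score_local_invariance_general η₁ η₂ η₃ g₁ g₂ g₃ s00 s11 c hc hη₂ hη₃ hη₁₂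
    hη₃₂ px p₀ hp₀
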